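/- arXiv:2412.20443 — 7 statements merged into one kernel-verified Lean document; each statement's English description precedes it below -/
import Mathlib

section
/- Let w be an integer with w ∉ {0, 2} such that 4w³ − 27 is squarefree. Then the Galois group over ℚ of the splitting field of f_{1,w}(x) := x³ − wx − 1 is isomorphic to the symmetric group S₃. -/
open Polynomial
open scoped Nat IntermediateField

/-!
A rational root of `X³ - wX - 1` would be an integer `n` with `n (n² - w) = 1`, so `n = ±1` and
`w ∈ {0, 2}`; hence the cubic is irreducible and `3` divides the order of its Galois group. Its
discriminant `4w³ - 27` is a square in the splitting field, but, being squarefree and different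
from `1`, not a square in `ℚ`; this gives a quadratic subfield, so `6` divides the order of the
Galois group, which embeds into `S₃`.
-/

theorem Polynomial.Gal.nonempty_mulEquiv_perm_of_factorial_le {F : Type*} [Field F] {p : F[X]}
    (hp : p.Separable) (hcard : p.natDegree ! ≤ Nat.card p.Gal) :
    Nonempty (p.Gal ≃* Equiv.Perm (Fin p.natDegree)) := by
  classical
  let K := p.SplittingField
  have : Fact ((p.map (algebraMap F K)).Splits) := ⟨SplittingField.splits p⟩
  have hroots : Fintype.card (p.rootSet K) = p.natDegree :=
    card_rootSet_eq_natDegree hp (SplittingField.splits p)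
  have hinj := galActionHom_injective p K
  have hbij : Function.Bijective (galActionHom p K) := by
    rw [Fintype.bijective_iff_injective_and_card, Fintype.card_perm, hroots]
    refine ⟨hinj, le_antisymm ?_ (Nat.card_eq_fintype_card (α := p.Gal) ▸ hcard)⟩
    simpa [Fintype.card_perm, hroots] using Fintype.card_le_of_injective _ hinj
  exact ⟨(MulEquiv.ofBijective _ hbij).trans (Fintype.equivFinOfCardEq hroots).permCongrHom⟩

theorem two_dvd_finrank_of_isSquare_algebraMap {F K : Type*} [Field F] [Field K] [Algebra F K]
    {d : F} (hd : ¬IsSquare d) (hK : IsSquare (algebraMap F K d)) :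
    2 ∣ Module.finrank F K := by
  obtain ⟨δ, hδ⟩ := hK
  have hirr : Irreducible (X ^ 2 - C d) :=
    X_pow_sub_C_irreducible_of_prime Nat.prime_two fun b hb => hd ⟨b, by rw [← hb, sq]⟩
  have hroot : aeval δ (X ^ 2 - C d) = 0 := by simp [hδ, sq]
  have hmin : minpoly F δ = X ^ 2 - C d :=
    (minpoly.eq_of_irreducible_of_monic hirr hroot (by monicity!)).symm
  have hint : IsIntegral F δ := ⟨X ^ 2 - C d, by monicity!, hroot⟩
  have hdeg : Module.finrank F F⟮δ⟯ = 2 := by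
    rw [IntermediateField.adjoin.finrank hint, hmin]; compute_degree!
  exact ⟨Module.finrank F⟮δ⟯ K, by rw [← Module.finrank_mul_finrank F F⟮δ⟯ K, hdeg]⟩

theorem Cubic.isSquare_algebraMap_discr {F K : Type*} [Field F] [Field K] [Algebra F K]
    {P : Cubic F} (ha : P.a ≠ 0) (hP : (P.toPoly.map (algebraMap F K)).Splits) :
    IsSquare (algebraMap F K P.discr) := by
  obtain ⟨x, y, z, h3⟩ := (Cubic.splits_iff_roots_eq_three ha).mp hP
  rw [Cubic.discr_eq_prod_three_roots ha h3, sq]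
  exact ⟨_, rfl⟩

theorem Cubic.nonempty_gal_mulEquiv_perm {F : Type*} [Field F] [CharZero F] {P : Cubic F}
    (ha : P.a ≠ 0) (hirr : Irreducible P.toPoly) (hd : ¬IsSquare P.discr) :
    Nonempty (P.toPoly.Gal ≃* Equiv.Perm (Fin 3)) := by
  have hdeg : P.toPoly.natDegree = 3 := Cubic.natDegree_of_a_ne_zero ha
  have hsep : P.toPoly.Separable := hirr.separable
  have h3 : 3 ∣ Nat.card P.toPoly.Gal :=
    hdeg ▸ Gal.prime_degree_dvd_card hirr (hdeg ▸ Nat.prime_three)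
  have h2 : 2 ∣ Nat.card P.toPoly.Gal := by
    rw [Gal.card_of_separable hsep]
    exact two_dvd_finrank_of_isSquare_algebraMap hd
      (Cubic.isSquare_algebraMap_discr ha (SplittingField.splits _))
  have h6 : 2 * 3 ∣ Nat.card P.toPoly.Gal := Nat.Coprime.mul_dvd_of_dvd_of_dvd (by norm_num) h2 h3
  refine hdeg ▸ Gal.nonempty_mulEquiv_perm_of_factorial_le hsep ?_
  rw [hdeg]
  exact Nat.le_of_dvd Nat.card_pos h6

theorem eq_zero_or_eq_two_of_isRoot_X_pow_three_sub_C_mul_X_sub_one {w : ℤ} {r : ℚ}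
    (hr : (X ^ 3 - C (w : ℚ) * X - 1 : ℚ[X]).IsRoot r) : w = 0 ∨ w = 2 := by
  have hmonic : (X ^ 3 - C w * X - 1 : ℤ[X]).Monic := by monicity!
  have hr' : aeval r (X ^ 3 - C w * X - 1 : ℤ[X]) = 0 := by simpa using hr
  obtain ⟨n, rfl⟩ := isInteger_of_is_root_of_monic hmonic hr'
  have hn : n ^ 3 - w * n - 1 = 0 := by
    exact_mod_cast (by simpa using hr : (n : ℚ) ^ 3 - w * n - 1 = 0)
  have hunit : n * (n ^ 2 - w) = 1 := by linear_combination hn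
  rcases Int.eq_one_or_neg_one_of_mul_eq_one hunit with rfl | rfl
  · left; linarith
  · right; linarith

theorem irreducible_X_pow_three_sub_C_mul_X_sub_one {w : ℤ} (hw0 : w ≠ 0) (hw2 : w ≠ 2) :
    Irreducible (X ^ 3 - C (w : ℚ) * X - 1 : ℚ[X]) := by
  have hdeg : (X ^ 3 - C (w : ℚ) * X - 1 : ℚ[X]).natDegree = 3 := by compute_degree!
  rw [irreducible_iff_roots_eq_zero_of_degree_le_three (by omega) (by omega),
    Multiset.eq_zero_iff_forall_notMem]
  intro r hr
  rcases eq_zero_or_eq_two_of_isRoot_X_pow_three_sub_C_mul_X_sub_one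
    (isRoot_of_mem_roots hr) with h | h
  exacts [hw0 h, hw2 h]

theorem not_isSquare_of_squarefree_four_mul_pow_three_sub_27 {w : ℤ}
    (hsf : Squarefree (4 * w ^ 3 - 27)) : ¬IsSquare (4 * w ^ 3 - 27) := by
  rintro ⟨r, hr⟩
  have hr1 : r * r = 1 := by
    rcases Int.isUnit_iff.mp (hsf r ⟨1, by rw [hr, mul_one]⟩) with rfl | rfl <;> rfl
  have h7 : w ^ 3 = 7 := by linarith
  have hmono : StrictMono fun a : ℤ => a ^ 3 := Odd.strictMono_pow (by decide)
  have h1 : 1 < w := hmono.lt_iff_lt.mp (by norm_num [h7])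
  have h2 : w < 2 := hmono.lt_iff_lt.mp (by norm_num [h7])
  omega

theorem stmt_2 (w : ℤ) (hw0 : w ≠ 0) (hw2 : w ≠ 2)
    (hsf : Squarefree (4 * w ^ 3 - 27)) :
    Nonempty ((X ^ 3 - C (w : ℚ) * X - 1 : ℚ[X]).Gal ≃* Equiv.Perm (Fin 3)) := by
  let P : Cubic ℚ := ⟨1, 0, -w, -1⟩
  have hP : P.toPoly = X ^ 3 - C (w : ℚ) * X - 1 := by simp [P, Cubic.toPoly]; ring
  have hdiscr : P.discr = ((4 * w ^ 3 - 27 : ℤ) : ℚ) := by simp [P, Cubic.discr]; ring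
  rw [← hP]
  refine P.nonempty_gal_mulEquiv_perm one_ne_zero
    (hP ▸ irreducible_X_pow_three_sub_C_mul_X_sub_one hw0 hw2) ?_
  rw [hdiscr, Rat.isSquare_intCast_iff]
  exact not_isSquare_of_squarefree_four_mul_pow_three_sub_27 hsf
end

section
/- Let a and b be positive integers with b ≥ 2. Then the trinomial f_{a,b}(x) := x³ − 2^{2a}x − 3^{b−1} is irreducible over ℚ if and only if (a,b) ≠ (1,2); moreover, f_{1,2}(x) = (x + 1)(x² − x − 3). -/
/-!
Over `ℚ` a monic cubic with integer coefficients is irreducible iff it has no integer root, and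
an integer root `x` of `f_{a,b}` satisfies `x (x² - 4^a) = 3^(b-1)`. The two factors cannot both
be divisible by `3`, since then `3 ∣ 4^a`, so one of them is `±1`. The second factor is never
`±1`, because `4^a ≡ 4 [MOD 12]` while `3` and `5` are not squares modulo `12`. Hence `x = -1`
and `4^a = 3^(b-1) + 1`, which modulo `8` forces `a = 1` and `b = 2`.
-/

open Polynomial

theorem Polynomial.Monic.irreducible_map_iff_forall_not_isRoot {A K : Type*} [CommRing A]
    [IsDomain A] [UniqueFactorizationMonoid A] [Field K] [Algebra A K] [IsFractionRing A K]
    {p : A[X]} (hp : p.Monic) (hdeg₂ : 2 ≤ p.natDegree) (hdeg₃ : p.natDegree ≤ 3) :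
    Irreducible (p.map (algebraMap A K)) ↔ ∀ x : A, ¬ p.IsRoot x := by
  have hpK : (p.map (algebraMap A K)).Monic := hp.map _
  have hroot (r : K) : r ∈ (p.map (algebraMap A K)).roots ↔ aeval r p = 0 := by
    rw [mem_roots hpK.ne_zero, IsRoot, eval_map_algebraMap]
  rw [hpK.irreducible_iff_roots_eq_zero_of_degree_le_three (by rwa [hp.natDegree_map])
    (by rwa [hp.natDegree_map]), Multiset.eq_zero_iff_forall_notMem]
  constructor
  · intro hnoroot x hx
    exact hnoroot _ ((hroot _).2 ((aeval_algebraMap_eq_zero_iff K x p).2 (by simpa using hx)))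
  · intro hnoroot r hr
    rw [hroot] at hr
    obtain ⟨x, rfl⟩ := isInteger_of_is_root_of_monic hp hr
    exact hnoroot x (by simpa using (aeval_algebraMap_eq_zero_iff K x p).1 hr)

theorem isUnit_of_dvd_prime_pow_of_not_dvd {M : Type*} [CommMonoidWithZero M] [IsCancelMulZero M]
    {p x : M} {n : ℕ} (hp : Prime p) (hx : x ∣ p ^ n) (hpx : ¬ p ∣ x) : IsUnit x := by
  obtain ⟨_ | i, -, hassoc⟩ := (dvd_prime_pow hp n).1 hx
  · exact associated_one_iff_isUnit.1 (by simpa using hassoc)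
  · exact absurd (hassoc.symm.dvd_iff_dvd_right.1 (dvd_pow_self p i.succ_ne_zero)) hpx

theorem Nat.three_pow_mod_eight (n : ℕ) : 3 ^ n % 8 = 1 ∨ 3 ^ n % 8 = 3 := by
  induction n with
  | zero => left; rfl
  | succ n ih => rw [pow_succ, Nat.mul_mod]; rcases ih with h | h <;> simp [h]

theorem Nat.eq_one_of_four_pow_eq_three_pow_add_one {a n : ℕ} (h : 4 ^ a = 3 ^ n + 1) :
    a = 1 ∧ n = 1 := by
  match a, h with
  | 0, h => simp at h
  | 1, h => exact ⟨rfl, (Nat.pow_eq_self_iff (a := 3) (by norm_num)).1 (by omega)⟩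
  | a + 2, h =>
    have h8 : 4 ^ (a + 2) % 8 = 0 := by rw [pow_add]; simp [Nat.mul_mod]
    rcases Nat.three_pow_mod_eight n with h3 | h3 <;> omega

theorem Int.not_isUnit_sq_sub_four_pow (x : ℤ) {a : ℕ} (ha : 1 ≤ a) :
    ¬ IsUnit (x ^ 2 - 4 ^ a) := by
  have h4 : (4 : ZMod 12) ^ a = 4 := by
    obtain ⟨k, rfl⟩ := Nat.exists_eq_add_of_le' ha
    clear ha
    induction k with
    | zero => rfl
    | succ k ih => rw [pow_succ, ih]; rfl
  have hsq : ∀ y : ZMod 12, y ^ 2 - 4 ≠ 1 ∧ y ^ 2 - 4 ≠ -1 := by decide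
  rw [Int.isUnit_iff]
  rintro (h | h) <;> apply_fun ((↑) : ℤ → ZMod 12) at h <;> push_cast [h4] at h
  exacts [(hsq x).1 h, (hsq x).2 h]

theorem Int.eq_neg_one_of_mul_sq_sub_four_pow_eq_three_pow {x : ℤ} {a n : ℕ} (ha : 1 ≤ a)
    (h : x * (x ^ 2 - 4 ^ a) = 3 ^ n) : x = -1 ∧ a = 1 ∧ n = 1 := by
  have h34 : ¬ (3 : ℤ) ∣ 4 ^ a := fun h3 => by
    have := Int.prime_three.dvd_of_dvd_pow h3; norm_num at this
  by_cases h3x : (3 : ℤ) ∣ x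
  · have h3y : ¬ (3 : ℤ) ∣ x ^ 2 - 4 ^ a := fun h3y => h34 (by
      simpa using dvd_sub (dvd_pow h3x two_ne_zero) h3y)
    exact absurd (isUnit_of_dvd_prime_pow_of_not_dvd Int.prime_three (Dvd.intro_left _ h) h3y)
      (Int.not_isUnit_sq_sub_four_pow x ha)
  · rcases Int.isUnit_iff.1 (isUnit_of_dvd_prime_pow_of_not_dvd Int.prime_three
      (Dvd.intro _ h) h3x) with rfl | rfl
    · have : (1 : ℤ) ≤ 4 ^ a := one_le_pow₀ (by norm_num)
      have : (0 : ℤ) < 3 ^ n := by positivity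
      nlinarith
    · have : (4 : ℤ) ^ a = 3 ^ n + 1 := by linear_combination h
      exact ⟨rfl, Nat.eq_one_of_four_pow_eq_three_pow_add_one (by exact_mod_cast this)⟩

theorem isRoot_trinomial_iff (x : ℤ) (a n : ℕ) :
    (X ^ 3 - C ((2 : ℤ) ^ (2 * a)) * X - C ((3 : ℤ) ^ n)).IsRoot x ↔
      x * (x ^ 2 - 4 ^ a) = 3 ^ n := by
  rw [IsRoot, pow_mul]
  simp only [eval_sub, eval_pow, eval_X, eval_mul, eval_C]
  constructor <;> intro h <;> linear_combination h

theorem stmt_5_general (a b : ℕ) (ha : 1 ≤ a) :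
    (Irreducible
        ((X ^ 3 - C ((2 : ℤ) ^ (2 * a)) * X - C ((3 : ℤ) ^ (b - 1))).map
          (algebraMap ℤ ℚ)) ↔ (a, b) ≠ (1, 2)) ∧
      (X ^ 3 - C ((2 : ℤ) ^ (2 * 1)) * X - C ((3 : ℤ) ^ (2 - 1)) : ℤ[X]) =
        (X + 1) * (X ^ 2 - X - C 3) := by
  refine ⟨?_, by simp only [C_pow]; norm_num; ring⟩
  have hmonic : (X ^ 3 - C ((2 : ℤ) ^ (2 * a)) * X - C ((3 : ℤ) ^ (b - 1))).Monic := by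
    monicity!
  have hdeg : (X ^ 3 - C ((2 : ℤ) ^ (2 * a)) * X - C ((3 : ℤ) ^ (b - 1))).natDegree = 3 := by
    compute_degree!
  rw [hmonic.irreducible_map_iff_forall_not_isRoot (by omega) hdeg.le]
  simp only [isRoot_trinomial_iff, ne_eq, Prod.mk.injEq]
  constructor
  · rintro hnoroot ⟨rfl, rfl⟩
    exact hnoroot (-1) (by norm_num)
  · rintro hab x hx
    obtain ⟨-, rfl, hb⟩ := Int.eq_neg_one_of_mul_sq_sub_four_pow_eq_three_pow ha hx
    omega

theorem stmt_5 (a b : ℕ) (ha : 1 ≤ a) (hb : 2 ≤ b) :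
    (Irreducible
        ((X ^ 3 - C ((2 : ℤ) ^ (2 * a)) * X - C ((3 : ℤ) ^ (b - 1))).map
          (algebraMap ℤ ℚ)) ↔ (a, b) ≠ (1, 2)) ∧
      (X ^ 3 - C ((2 : ℤ) ^ (2 * 1)) * X - C ((3 : ℤ) ^ (2 - 1)) : ℤ[X]) =
        (X + 1) * (X ^ 2 - X - C 3) :=
  stmt_5_general a b ha
end

section
/- Let a and b be positive integers with b ≥ 2 and (a,b) ≠ (1,2) such that δ := 2^{6a+2} − 3^{2b+1} is negative and squarefree. Then the Galois group over ℚ of the splitting field of f_{a,b}(x) := x³ − 2^{2a}x − 3^{b−1} is isomorphic to the symmetric group S₃. -/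
/-!
The cubic `x³ - p x - q` has discriminant `4p³ - 27q²`, which for `p = 4^a`, `q = 3^(b-1)`
is `δ`. A rational root would be an integer `n`, and then `δ = (3n² - p)² (4p - 3n²)`, so
squarefreeness forces `3n² - 4^a = ±1`. Reducing modulo 3 and modulo 8 leaves only `n = 0`
and `a = 1`, `n = ±1`, and of these only `n = -1` is a root, exactly when `b = 2`; hence `f` is
irreducible. As `δ < 0`, two
distinct real roots are impossible, so complex conjugation swaps the two non-real roots, and a
transitive subgroup of `S₃` containing a transposition is all of `S₃`.
-/

open Polynomial

theorem sq_dvd_cubic_disc_of_root {R : Type*} [CommRing R] {A B n : R} (h : n ^ 3 = A * n + B) :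
    (3 * n ^ 2 - A) ^ 2 ∣ 4 * A ^ 3 - 27 * B ^ 2 :=
  ⟨4 * A - 3 * n ^ 2, by rw [show B = n ^ 3 - A * n by linear_combination -h]; ring⟩

theorem Int.three_mul_sq_sub_eq_one_or_neg_one_of_root {A B n : ℤ}
    (hsf : Squarefree (4 * A ^ 3 - 27 * B ^ 2)) (h : n ^ 3 = A * n + B) :
    3 * n ^ 2 - A = 1 ∨ 3 * n ^ 2 - A = -1 :=
  Int.isUnit_iff.mp (hsf _ (sq (3 * n ^ 2 - A) ▸ sq_dvd_cubic_disc_of_root h))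

theorem four_pow_ne_three_mul_sq_sub_one (a : ℕ) (n : ℤ) : (4 : ℤ) ^ a ≠ 3 * n ^ 2 - 1 := by
  intro h
  have h3 := congrArg (fun z : ℤ => (z : ZMod 3)) h
  push_cast at h3
  rw [show (4 : ZMod 3) = 1 by decide, one_pow, show (3 : ZMod 3) = 0 by decide, zero_mul,
    zero_sub] at h3
  exact absurd h3 (by decide)

theorem four_pow_eq_three_mul_sq_add_one {a : ℕ} {n : ℤ} (h : (4 : ℤ) ^ a = 3 * n ^ 2 + 1) :
    a = 0 ∧ n = 0 ∨ a = 1 ∧ (n = 1 ∨ n = -1) := by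
  obtain ha | rfl | rfl : 2 ≤ a ∨ a = 0 ∨ a = 1 := by omega
  · have h8 := congrArg (fun z : ℤ => (z : ZMod 8)) h
    push_cast at h8
    rw [← Nat.add_sub_cancel' ha, pow_add, show (4 : ZMod 8) ^ 2 = 0 by decide, zero_mul] at h8
    exact absurd h8.symm ((by decide : ∀ x : ZMod 8, 3 * x ^ 2 + 1 ≠ 0) _)
  · left; simpa using h
  · exact .inr ⟨rfl, sq_eq_one_iff.mp (by linarith)⟩

theorem cubic_disc_eq_sq_of_roots {K : Type*} [Field K] {p q x y : K}
    (hx : x ^ 3 - p * x - q = 0) (hy : y ^ 3 - p * y - q = 0) (hxy : x ≠ y) :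
    4 * p ^ 3 - 27 * q ^ 2 = ((x - y) * (x + 2 * y) * (2 * x + y)) ^ 2 := by
  have hp : p = x ^ 2 + x * y + y ^ 2 := by
    have : (x - y) * (x ^ 2 + x * y + y ^ 2 - p) = 0 := by linear_combination hx - hy
    linear_combination -(mul_eq_zero.mp this).resolve_left (sub_ne_zero.mpr hxy)
  rw [show q = x ^ 3 - p * x by linear_combination -hx, hp]
  ring

theorem card_rootSet_real_le_one_of_cubic_disc_neg {p q : ℚ}
    (hdisc : 4 * p ^ 3 - 27 * q ^ 2 < 0) :
    Fintype.card ((X ^ 3 - C p * X - C q : ℚ[X]).rootSet ℝ) ≤ 1 := by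
  have hroot (z : (X ^ 3 - C p * X - C q : ℚ[X]).rootSet ℝ) :
      (z : ℝ) ^ 3 - p * z - q = 0 := by
    simpa using ((mem_rootSet.mp z.2).2)
  refine Fintype.card_le_one_iff.mpr fun x y => Subtype.ext (not_not.mp fun hxy => ?_)
  have hdiscR : (4 * p ^ 3 - 27 * q ^ 2 : ℝ) < 0 := by exact_mod_cast hdisc
  rw [cubic_disc_eq_sq_of_roots (hroot x) (hroot y) hxy] at hdiscR
  exact (sq_nonneg _).not_gt hdiscR

theorem Polynomial.Gal.nonempty_mulEquiv_perm_of_irreducible_cubic {f : ℚ[X]}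
    (hirr : Irreducible f) (hdeg : f.natDegree = 3) (hreal : Fintype.card (f.rootSet ℝ) < 3) :
    Nonempty (f.Gal ≃* Equiv.Perm (Fin 3)) := by
  have hC : Fintype.card (f.rootSet ℂ) = 3 :=
    hdeg ▸ card_rootSet_eq_natDegree hirr.separable (IsAlgClosed.splits _)
  have hbij := galActionHom_bijective_of_prime_degree' hirr (hdeg ▸ Nat.prime_three)
    (by omega) (by omega)
  exact ⟨(MulEquiv.ofBijective _ hbij).trans (Fintype.equivFinOfCardEq hC).permCongrHom⟩

theorem irreducible_cubic_of_forall_int_ne {A B : ℤ} (h : ∀ n : ℤ, n ^ 3 ≠ A * n + B) :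
    Irreducible (X ^ 3 - C (A : ℚ) * X - C (B : ℚ)) := by
  have hmonic : (X ^ 3 - C (A : ℚ) * X - C (B : ℚ)).Monic := by monicity!
  have hdeg : (X ^ 3 - C (A : ℚ) * X - C (B : ℚ)).natDegree = 3 := by compute_degree!
  rw [irreducible_iff_roots_eq_zero_of_degree_le_three (by omega) (by omega),
    Multiset.eq_zero_iff_forall_notMem]
  intro r hr
  rw [mem_roots hmonic.ne_zero, IsRoot.def] at hr
  simp only [eval_sub, eval_mul, eval_pow, eval_X, eval_C] at hr
  have hint : IsIntegral ℤ r := by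
    refine ⟨(X ^ 3 - C A * X - C B : ℤ[X]), by monicity!, ?_⟩
    rw [← aeval_def]
    simpa using hr
  obtain ⟨n, rfl⟩ := IsIntegrallyClosed.isIntegral_iff.mp hint
  rw [algebraMap_int_eq, eq_intCast] at hr
  exact h n (by exact_mod_cast (by linear_combination hr : (n : ℚ) ^ 3 = A * n + B))

theorem pow_three_ne_four_pow_mul_add_three_pow (a b : ℕ) (hab : (a, b) ≠ (1, 2))
    (hsf : Squarefree (4 * ((4 : ℤ) ^ a) ^ 3 - 27 * ((3 : ℤ) ^ (b - 1)) ^ 2)) (n : ℤ) :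
    n ^ 3 ≠ 4 ^ a * n + 3 ^ (b - 1) := by
  intro h
  rcases Int.three_mul_sq_sub_eq_one_or_neg_one_of_root hsf h with h1 | h1
  · exact four_pow_ne_three_mul_sq_sub_one a n (by linarith)
  · have hpos : (0 : ℤ) < 3 ^ (b - 1) := by positivity
    rcases four_pow_eq_three_mul_sq_add_one (a := a) (n := n) (by linarith) with
      ⟨rfl, rfl⟩ | ⟨rfl, rfl | rfl⟩
    · norm_num at h; linarith
    · norm_num at h; linarith
    · have h3 : (3 : ℤ) ^ (b - 1) = 3 ^ 1 := by linarith
      have := Nat.pow_right_injective (by norm_num) (by exact_mod_cast h3 : 3 ^ (b - 1) = 3 ^ 1)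
      exact hab (by simp only [Prod.mk.injEq, true_and]; omega)

theorem stmt_8_general (a b : ℕ) (hb : 2 ≤ b) (hab : (a, b) ≠ (1, 2))
    (hδneg : (2 : ℤ) ^ (6 * a + 2) - 3 ^ (2 * b + 1) < 0)
    (hδsf : Squarefree ((2 : ℤ) ^ (6 * a + 2) - 3 ^ (2 * b + 1))) :
    Nonempty
      ((X ^ 3 - C ((2 : ℚ) ^ (2 * a)) * X - C ((3 : ℚ) ^ (b - 1)) : ℚ[X]).Gal ≃*
        Equiv.Perm (Fin 3)) := by
  have hδ : (2 : ℤ) ^ (6 * a + 2) - 3 ^ (2 * b + 1) =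
      4 * ((4 : ℤ) ^ a) ^ 3 - 27 * ((3 : ℤ) ^ (b - 1)) ^ 2 := by
    obtain ⟨c, rfl⟩ := Nat.exists_eq_add_of_le' (Nat.one_le_of_lt hb)
    rw [Nat.add_sub_cancel, show (4 : ℤ) ^ a = 2 ^ (2 * a) by rw [pow_mul]; norm_num]
    ring
  have hf : (X ^ 3 - C ((2 : ℚ) ^ (2 * a)) * X - C ((3 : ℚ) ^ (b - 1)) : ℚ[X]) =
      X ^ 3 - C (((4 ^ a : ℤ)) : ℚ) * X - C ((3 ^ (b - 1) : ℤ) : ℚ) := by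
    rw [pow_mul]; norm_num
  have hirr := irreducible_cubic_of_forall_int_ne
    (pow_three_ne_four_pow_mul_add_three_pow a b hab (hδ ▸ hδsf))
  have hreal := card_rootSet_real_le_one_of_cubic_disc_neg
    (p := (4 ^ a : ℤ)) (q := (3 ^ (b - 1) : ℤ)) (by exact_mod_cast hδ ▸ hδneg)
  rw [hf]
  exact Gal.nonempty_mulEquiv_perm_of_irreducible_cubic hirr (by compute_degree!) (by omega)

theorem stmt_8 (a b : ℕ) (ha : 1 ≤ a) (hb : 2 ≤ b) (hab : (a, b) ≠ (1, 2))
    (hδneg : (2 : ℤ) ^ (6 * a + 2) - 3 ^ (2 * b + 1) < 0)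
    (hδsf : Squarefree ((2 : ℤ) ^ (6 * a + 2) - 3 ^ (2 * b + 1))) :
    Nonempty
      ((X ^ 3 - C ((2 : ℚ) ^ (2 * a)) * X - C ((3 : ℚ) ^ (b - 1)) : ℚ[X]).Gal ≃*
        Equiv.Perm (Fin 3)) :=
  stmt_8_general a b hb hab hδneg hδsf
end

section
/- Let a and b be positive integers with b ≥ 2 and (a,b) ≠ (1,2), and define g_{a,b}(x) := x³ − 2^{2a}·3^{2b−2}x − 3^{4b−4}. Then g_{a,b}(x) is irreducible over ℚ but is not monogenic; moreover, if θ is a root of f_{a,b}(x) := x³ − 2^{2a}x − 3^{b−1}, then 3^{b−1}θ is a root of g_{a,b}(x), so that f_{a,b} and g_{a,b} generate the same cubic field ℚ(θ). -/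
/-!
Everything rests on `g = f.scaleRoots 3^(b-1)` for `f = X³ - 2^(2a) X - 3^(b-1)`.

Irreducibility: a rational root of the cubic `g` gives a rational, hence integral, root `m` of `f`,
so `m (m² - 4^a) = 3^(b-1)`. The two factors cannot both be divisible by `3`, so one is `±1`:
`m² - 4^a = (m - 2^a)(m + 2^a) = ±1` is impossible, and `m = -1` forces
`(2^a - 1)(2^a + 1) = 3^(b-1)`, whence again `2^a - 1 = 1`, i.e. `(a, b) = (1, 2)`.

Non-monogenity: `θ = η / 3^(b-1)` is integral, but it does not lie in `ℤ[η]` for a root `η` of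
`g`: otherwise `g ∣ 3^(b-1) q - X` in `ℤ[X]`, which fails modulo `3`.
-/

open Polynomial

/-- A monic polynomial `f ∈ ℤ[x]` is monogenic if it is irreducible over `ℚ` and
`ℤ[θ]` is the ring of integers (the integral closure of `ℤ`) of `ℚ(θ)`, where `θ`
is a root of `f`. -/
def IsMonogenic (f : Polynomial ℤ) : Prop :=
  f.Monic ∧ Irreducible (f.map (algebraMap ℤ ℚ)) ∧
    Algebra.adjoin ℤ {AdjoinRoot.root (f.map (algebraMap ℤ ℚ))} =
      integralClosure ℤ (AdjoinRoot (f.map (algebraMap ℤ ℚ)))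

theorem Polynomial.scaleRoots_X_pow_three_sub_C_mul_X_sub_C {R : Type*} [CommRing R]
    [Nontrivial R] (p q s : R) :
    (X ^ 3 - C p * X - C q).scaleRoots s = X ^ 3 - C (p * s ^ 2) * X - C (q * s ^ 3) := by
  have hdeg : (X ^ 3 - C p * X - C q).natDegree = 3 := by compute_degree!
  ext i
  rw [coeff_scaleRoots, hdeg]
  rcases i with _ | _ | _ | _ | i <;> simp [coeff_X, coeff_C, -map_mul, -map_pow]

theorem Prime.isUnit_or_isUnit_of_mul_eq_pow {M : Type*} [CommMonoidWithZero M] [IsCancelMulZero M]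
    {p x y : M} (hp : Prime p) {n : ℕ} (h : x * y = p ^ n) (hxy : ¬ (p ∣ x ∧ p ∣ y)) :
    IsUnit x ∨ IsUnit y := by
  have isUnit_of_dvd {z : M} (hz : z ∣ p ^ n) (hpz : ¬ p ∣ z) : IsUnit z := by
    obtain ⟨i, -, hzi⟩ := (dvd_prime_pow hp n).mp hz
    rcases i with _ | i
    · simpa using hzi
    · exact absurd ((dvd_pow_self p i.succ_ne_zero).trans hzi.dvd') hpz
  rw [not_and_or] at hxy
  exact hxy.imp (isUnit_of_dvd (Dvd.intro y h)) (isUnit_of_dvd (Dvd.intro_left x h))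

theorem cube_sub_two_pow_mul_sub_three_pow_eq_zero_iff (a e : ℕ) (m : ℤ) :
    m ^ 3 - 2 ^ (2 * a) * m - 3 ^ e = 0 ↔ a = 1 ∧ e = 1 ∧ m = -1 := by
  refine ⟨fun h => ?_, by rintro ⟨rfl, rfl, rfl⟩; norm_num⟩
  set t : ℤ := 2 ^ a with ht
  have ht1 : 1 ≤ t := one_le_pow₀ (by norm_num)
  have h3t : ¬ (3 : ℤ) ∣ t := fun h3 => by
    simpa using Int.prime_three.dvd_of_dvd_pow h3
  have h3e : (0 : ℤ) < 3 ^ e := by positivity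
  have hfac : m * ((m - t) * (m + t)) = 3 ^ e := by
    rw [pow_mul', ← ht] at h
    linear_combination h
  have hcop : ¬ ((3 : ℤ) ∣ m ∧ 3 ∣ (m - t) * (m + t)) := by
    rintro ⟨hm, hmt⟩
    have h3t2 : (3 : ℤ) ∣ t ^ 2 := by
      have := dvd_sub (dvd_mul_of_dvd_left hm m) hmt
      rwa [show m * m - (m - t) * (m + t) = t ^ 2 by ring] at this
    exact h3t (Int.prime_three.dvd_of_dvd_pow h3t2)
  rcases Int.prime_three.isUnit_or_isUnit_of_mul_eq_pow hfac hcop with hm | hm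
  · rcases Int.isUnit_iff.mp hm with rfl | rfl
    · nlinarith
    have hfac' : (t - 1) * (t + 1) = 3 ^ e := by linear_combination hfac
    have hcop' : ¬ ((3 : ℤ) ∣ t - 1 ∧ 3 ∣ t + 1) := by
      rintro ⟨h1, h2⟩
      have := dvd_sub h2 h1
      norm_num at this
    rcases Int.prime_three.isUnit_or_isUnit_of_mul_eq_pow hfac' hcop' with ht' | ht'
    · have ht2 : t = 2 := by rcases Int.isUnit_iff.mp ht' with h | h <;> omega
      rw [ht2] at hfac'
      have ha : a = 1 := Nat.pow_right_injective le_rfl (by rw [ht] at ht2; exact_mod_cast ht2)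
      have he : e = 1 := Nat.pow_right_injective (by norm_num : 2 ≤ 3)
        (by norm_num at hfac'; exact_mod_cast hfac'.symm)
      exact ⟨ha, he, rfl⟩
    · rcases Int.isUnit_iff.mp ht' with h | h <;> omega
  · have h1 := Int.isUnit_iff.mp (isUnit_of_mul_isUnit_left hm)
    have h2 := Int.isUnit_iff.mp (isUnit_of_mul_isUnit_right hm)
    have hm0 : m = 0 := by omega
    rw [hm0, zero_mul] at hfac
    exact absurd hfac h3e.ne

theorem Polynomial.Monic.irreducible_map_rat_scaleRoots {p : ℤ[X]} (hp : p.Monic)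
    (hdeg : p.natDegree ∈ Finset.Icc 1 3) (hroot : ∀ m : ℤ, ¬ p.IsRoot m) {s : ℤ} (hs : s ≠ 0) :
    Irreducible ((p.scaleRoots s).map (algebraMap ℤ ℚ)) := by
  refine irreducible_of_degree_le_three_of_not_isRoot ?_ fun x hx => ?_
  · rwa [natDegree_map_eq_of_injective (RingHom.injective_int _), natDegree_scaleRoots]
  have hsQ : algebraMap ℤ ℚ s ≠ 0 := by simpa using hs
  have hx' : p.eval₂ (algebraMap ℤ ℚ) (x / algebraMap ℤ ℚ s) = 0 := by
    have := scaleRoots_eval₂_mul (p := p) (algebraMap ℤ ℚ) (x / algebraMap ℤ ℚ s) s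
    rw [mul_div_cancel₀ x hsQ, ← eval_map, hx.eq_zero, eq_comm] at this
    exact (mul_eq_zero.mp this).resolve_left (pow_ne_zero _ hsQ)
  obtain ⟨m, hm⟩ := IsIntegrallyClosed.isIntegral_iff.mp ⟨p, hp, hx'⟩
  rw [← hm, eval₂_at_apply, map_eq_zero_iff _ (RingHom.injective_int _)] at hx'
  exact hroot m hx'

theorem Polynomial.Monic.not_isMonogenic_scaleRoots {f : ℤ[X]} (hf : f.Monic)
    (hdeg : 2 ≤ f.natDegree) {s : ℤ} (hs0 : s ≠ 0) (hs : ¬ IsUnit s) :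
    ¬ IsMonogenic (f.scaleRoots s) := by
  rintro ⟨hg, -, hadjoin⟩
  set g := f.scaleRoots s
  set η := AdjoinRoot.root (g.map (algebraMap ℤ ℚ))
  have hη : aeval η g = 0 := by
    rw [← aeval_map_algebraMap ℚ, AdjoinRoot.aeval_eq, AdjoinRoot.mk_self]
  have hsK : IsUnit (algebraMap ℤ (AdjoinRoot (g.map (algebraMap ℤ ℚ))) s) := by
    rw [IsScalarTower.algebraMap_apply ℤ ℚ]
    exact (IsUnit.mk0 _ (by simpa using hs0)).map _
  obtain ⟨t, ht⟩ : ∃ t, algebraMap ℤ _ s * t = η :=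
    ⟨↑hsK.unit⁻¹ * η, by rw [← mul_assoc, hsK.mul_val_inv, one_mul]⟩
  have ht_root : aeval t f = 0 := by
    have := scaleRoots_eval₂_mul (p := f) (algebraMap ℤ _) t s
    rw [ht, ← aeval_def, hη, ← aeval_def, eq_comm] at this
    exact (hsK.pow _).mul_right_eq_zero.mp this
  have ht_mem : t ∈ Algebra.adjoin ℤ {η} := hadjoin ▸ ⟨f, hf, ht_root⟩
  rw [Algebra.adjoin_singleton_eq_range_aeval] at ht_mem
  obtain ⟨q, hq⟩ := ht_mem
  have hdvd : g ∣ C s * q - X := by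
    refine (map_dvd_map (algebraMap ℤ ℚ) (RingHom.injective_int _) hg).mp ?_
    rw [← AdjoinRoot.mk_eq_zero, ← AdjoinRoot.aeval_eq, aeval_map_algebraMap, map_sub, map_mul,
      aeval_C, aeval_X, show aeval η q = t from hq, ht, sub_self]
  obtain ⟨p, hp, hps⟩ := Nat.exists_prime_and_dvd (n := s.natAbs)
    (by rwa [Int.isUnit_iff_natAbs_eq] at hs)
  have : Fact p.Prime := ⟨hp⟩
  have hs_p : Int.castRingHom (ZMod p) s = 0 := by
    rwa [eq_intCast, ZMod.intCast_zmod_eq_zero_iff_dvd, Int.natCast_dvd]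
  -- Modulo a prime factor of `s`, the monic polynomial `g` of degree `≥ 2` would divide `-X`.
  have hdvd_p := Polynomial.map_dvd (Int.castRingHom (ZMod p)) hdvd
  simp only [Polynomial.map_sub, Polynomial.map_mul, map_C, map_X, hs_p, C_0, zero_mul, zero_sub,
    dvd_neg] at hdvd_p
  have := natDegree_le_of_dvd hdvd_p X_ne_zero
  rw [hg.natDegree_map, natDegree_X, natDegree_scaleRoots] at this
  omega

namespace IntermediateField

theorem adjoin_simple_algebraMap_mul {F E : Type*} [Field F] [Field E]
    [Algebra F E] {c : F} (hc : c ≠ 0) (x : E) : F⟮algebraMap F E c * x⟯ = F⟮x⟯ := by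
  refine le_antisymm (adjoin_simple_le_iff.mpr (mul_mem (algebraMap_mem _ c)
    (mem_adjoin_simple_self F x))) (adjoin_simple_le_iff.mpr ?_)
  have h := mul_mem (algebraMap_mem F⟮algebraMap F E c * x⟯ c⁻¹)
    (mem_adjoin_simple_self F (algebraMap F E c * x))
  rwa [← mul_assoc, ← map_mul, inv_mul_cancel₀ hc, map_one, one_mul] at h

end IntermediateField

theorem stmt_10_general (a b : ℕ) (hb : 2 ≤ b) (hab : (a, b) ≠ (1, 2)) :
    Irreducible
      ((X ^ 3 - C ((2 : ℤ) ^ (2 * a) * 3 ^ (2 * b - 2)) * X - C ((3 : ℤ) ^ (4 * b - 4))).map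
        (algebraMap ℤ ℚ)) ∧
    ¬ IsMonogenic
      (X ^ 3 - C ((2 : ℤ) ^ (2 * a) * 3 ^ (2 * b - 2)) * X - C ((3 : ℤ) ^ (4 * b - 4))) ∧
    ∀ θ : ℂ,
      aeval θ (X ^ 3 - C ((2 : ℤ) ^ (2 * a)) * X - C ((3 : ℤ) ^ (b - 1))) = 0 →
        aeval ((3 : ℂ) ^ (b - 1) * θ)
            (X ^ 3 - C ((2 : ℤ) ^ (2 * a) * 3 ^ (2 * b - 2)) * X -
              C ((3 : ℤ) ^ (4 * b - 4))) = 0 ∧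
          IntermediateField.adjoin ℚ {θ} =
            IntermediateField.adjoin ℚ {(3 : ℂ) ^ (b - 1) * θ} := by
  obtain ⟨e, rfl⟩ : ∃ e, b = e + 1 := ⟨b - 1, by omega⟩
  rw [show 2 * (e + 1) - 2 = 2 * e by omega, show 4 * (e + 1) - 4 = 4 * e by omega,
    Nat.add_sub_cancel]
  set f : ℤ[X] := X ^ 3 - C ((2 : ℤ) ^ (2 * a)) * X - C ((3 : ℤ) ^ e)
  have hg : X ^ 3 - C ((2 : ℤ) ^ (2 * a) * 3 ^ (2 * e)) * X - C ((3 : ℤ) ^ (4 * e)) =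
      f.scaleRoots (3 ^ e) := by
    rw [scaleRoots_X_pow_three_sub_C_mul_X_sub_C]
    ring_nf
  have hf : f.Monic := by simp only [f]; monicity!
  have hf_deg : f.natDegree = 3 := by simp only [f]; compute_degree!
  have hf_root (m : ℤ) : ¬ f.IsRoot m := by
    have := (cube_sub_two_pow_mul_sub_three_pow_eq_zero_iff a e m).not.mpr
      (by rintro ⟨rfl, rfl, -⟩; exact hab rfl)
    simpa [f] using this
  have hs0 : (3 : ℤ) ^ e ≠ 0 := by positivity
  rw [hg]
  refine ⟨hf.irreducible_map_rat_scaleRoots (by simp [hf_deg]) hf_root hs0,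
    hf.not_isMonogenic_scaleRoots (by omega) hs0 ?_, fun θ hθ => ⟨?_, ?_⟩⟩
  · rw [isUnit_pow_iff (by omega)]
    exact Int.prime_three.not_isUnit
  · simpa using scaleRoots_aeval_eq_zero (r := (3 : ℤ) ^ e) hθ
  · simpa using
      (IntermediateField.adjoin_simple_algebraMap_mul (F := ℚ) (c := 3 ^ e) (by positivity) θ).symm

theorem stmt_10 (a b : ℕ) (ha : 1 ≤ a) (hb : 2 ≤ b) (hab : (a, b) ≠ (1, 2)) :
    Irreducible
      ((X ^ 3 - C ((2 : ℤ) ^ (2 * a) * 3 ^ (2 * b - 2)) * X - C ((3 : ℤ) ^ (4 * b - 4))).map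
        (algebraMap ℤ ℚ)) ∧
    ¬ IsMonogenic
      (X ^ 3 - C ((2 : ℤ) ^ (2 * a) * 3 ^ (2 * b - 2)) * X - C ((3 : ℤ) ^ (4 * b - 4))) ∧
    ∀ θ : ℂ,
      aeval θ (X ^ 3 - C ((2 : ℤ) ^ (2 * a)) * X - C ((3 : ℤ) ^ (b - 1))) = 0 →
        aeval ((3 : ℂ) ^ (b - 1) * θ)
            (X ^ 3 - C ((2 : ℤ) ^ (2 * a) * 3 ^ (2 * b - 2)) * X -
              C ((3 : ℤ) ^ (4 * b - 4))) = 0 ∧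
          IntermediateField.adjoin ℚ {θ} =
            IntermediateField.adjoin ℚ {(3 : ℂ) ^ (b - 1) * θ} :=
  stmt_10_general a b hb hab
end

section
/- Let a and b be integers with a ≥ 1 and b ≥ 2. Then 2^{2a} − 3^{b−1} = 1 holds if and only if (a,b) = (1,2), and the equation 2^{2a} − 3^{2(b−1)} = 1 has no solutions. -/
/-!
Write the equation as `4 ^ a = 3 ^ k + 1`. For `k ≥ 2` the right side is `1` modulo `9`, and `4` has
order `3` modulo `9`, so `3 ∣ a`; but then `4 ^ a = 64 ^ (a / 3)` is `1` modulo `7`, forcing `7 ∣ 3 ^ k`.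
The cases `k = 0, 1` are immediate, leaving only `a = k = 1`.
-/

lemma orderOf_four_zmod_nine : orderOf (4 : ZMod 9) = 3 :=
  have : Fact (Nat.Prime 3) := ⟨by norm_num⟩
  orderOf_eq_prime (by decide) (by decide)

lemma four_pow_ne_three_pow_add_one {a k : ℕ} (hk : 2 ≤ k) : 4 ^ a ≠ 3 ^ k + 1 := by
  intro h
  obtain ⟨j, rfl⟩ := Nat.exists_eq_add_of_le hk
  have h9 : (4 : ZMod 9) ^ a = 1 := by
    have := congrArg (Nat.cast : ℕ → ZMod 9) h
    push_cast at this
    rw [this, pow_add, show (3 : ZMod 9) ^ 2 = 0 by decide, zero_mul, zero_add]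
  obtain ⟨m, rfl⟩ : 3 ∣ a := orderOf_four_zmod_nine ▸ orderOf_dvd_of_pow_eq_one h9
  have h7 : (3 : ZMod 7) ^ (2 + j) = 0 := by
    have := congrArg (Nat.cast : ℕ → ZMod 7) h
    push_cast at this
    rw [pow_mul, show (4 : ZMod 7) ^ 3 = 1 by decide, one_pow] at this
    exact add_eq_right.mp this.symm
  have h3 : (3 : ZMod 7) ≠ 0 := by decide
  have : Fact (Nat.Prime 7) := ⟨by norm_num⟩
  exact h3 (eq_zero_of_pow_eq_zero h7)

theorem four_pow_eq_three_pow_add_one_iff {a k : ℕ} : 4 ^ a = 3 ^ k + 1 ↔ a = 1 ∧ k = 1 := by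
  refine ⟨fun h => ?_, fun ⟨ha, hk⟩ => by subst ha hk; rfl⟩
  match k, a with
  | 0, 0 | 0, a + 1 => omega
  | 1, a => exact ⟨Nat.pow_right_injective (by norm_num : 2 ≤ 4) (h.trans (pow_one 4).symm), rfl⟩
  | k + 2, a => exact absurd h (four_pow_ne_three_pow_add_one (by omega))

theorem stmt_12_general (a b : ℕ) :
    ((2 : ℤ) ^ (2 * a) - 3 ^ (b - 1) = 1 ↔ (a, b) = (1, 2)) ∧
      (2 : ℤ) ^ (2 * a) - 3 ^ (2 * (b - 1)) ≠ 1 := by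
  have key (k : ℕ) : (2 : ℤ) ^ (2 * a) - 3 ^ k = 1 ↔ a = 1 ∧ k = 1 := by
    rw [← four_pow_eq_three_pow_add_one_iff, pow_mul, sub_eq_iff_eq_add, add_comm]
    norm_cast
  rw [Ne, key, key, Prod.mk.injEq]
  omega

theorem stmt_12 (a b : ℕ) (ha : 1 ≤ a) (hb : 2 ≤ b) :
    ((2 : ℤ) ^ (2 * a) - 3 ^ (b - 1) = 1 ↔ (a, b) = (1, 2)) ∧
      (2 : ℤ) ^ (2 * a) - 3 ^ (2 * (b - 1)) ≠ 1 :=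
  stmt_12_general a b
end

section
/- Let N be an integer with N ≥ 6 and N ≡ 2 (mod 4), let b₁ and b₂ be positive integers, and suppose that the trinomials f_{N,b₁}(x) := x^N − N(N−1)^{b₁}x − (N−1) and f_{N,b₂}(x) := x^N − N(N−1)^{b₂}x − (N−1) are both monogenic. If a root of f_{N,b₁} and a root of f_{N,b₂} generate the same degree-N extension of ℚ, then b₁ = b₂. -/
/-!
If `ℤ[θ₁]` and `ℤ[θ₂]` are both the ring of integers of `K = ℚ(θ₁) = ℚ(θ₂)`, the transition
matrices between the two power bases are integral in both directions, so the two minimal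
polynomials have the same discriminant. For a trinomial `f = X ^ n - a X - b` with root `θ`,
`θ f'(θ) = (n - 1) a θ + n b` is affine in `θ`, and the norm of `r - θ` is `f(r)`; this gives
`N(f'(θ)) = ± (n ^ n b ^ (n - 1) - (1 - n) ^ (n - 1) a ^ n)`. For `a = N (N - 1) ^ k`,
`b = N - 1` this determines `(N - 1) ^ (k N)`, hence `k`.
-/

open Polynomial

namespace PowerBasis

variable {F L : Type*} [Field F] [Field L] [Algebra F L]

theorem norm_algebraMap_sub_gen (pb : PowerBasis F L) (r : F) :
    Algebra.norm F (algebraMap F L r - pb.gen) = (minpoly F pb.gen).eval r := by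
  rw [Algebra.norm_eq_matrix_det pb.basis, map_sub, AlgHom.commutes, ← charpoly_leftMulMatrix,
    Matrix.eval_charpoly, Matrix.algebraMap_eq_diagonal, Matrix.scalar_apply]
  rfl

theorem norm_aeval_derivative_minpoly_of_eq_trinomial (pb : PowerBasis F L) {n : ℕ} {a b : F}
    (hn : 2 ≤ n) (ha : (1 - n : F) * a ≠ 0) (hb : b ≠ 0)
    (hmin : minpoly F pb.gen = X ^ n - C a * X - C b) :
    Algebra.norm F (aeval pb.gen (derivative (minpoly F pb.gen))) =
      (-1) ^ (n + 1) * (n ^ n * b ^ (n - 1) - (1 - n) ^ (n - 1) * a ^ n) := by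
  obtain ⟨m, rfl⟩ : ∃ m, n = m + 2 := ⟨n - 2, by omega⟩
  set θ := pb.gen
  have hdim : pb.dim = m + 2 := by
    rw [← pb.natDegree_minpoly, hmin]; compute_degree!; simp
  have hθ : θ ^ (m + 2) = algebraMap F L a * θ + algebraMap F L b := by
    have := minpoly.aeval F θ
    simp only [hmin, map_sub, map_pow, map_mul, aeval_X, aeval_C] at this
    linear_combination this
  set c : F := (1 - (m + 2 : ℕ)) * a with hc
  clear_value c
  obtain ⟨r, hr⟩ : ∃ r : F, c * r = (m + 2 : ℕ) * b := ⟨_, mul_div_cancel₀ _ ha⟩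
  -- `θ f'(θ) = n θ ^ n - a θ = (n - 1) a θ + n b = c (r - θ)`
  have hmul : θ * aeval θ (derivative (minpoly F θ)) =
      algebraMap F L c * (algebraMap F L r - θ) := by
    rw [mul_sub, ← map_mul, hr, hmin]
    simp only [derivative_X_pow, derivative_mul, derivative_C, derivative_X,
      map_sub, map_mul, map_natCast, aeval_X_pow, aeval_C, zero_mul, mul_one, zero_add,
      sub_zero, show m + 2 - 1 = m + 1 from rfl]
    simp only [hc, map_mul, map_sub, map_one, map_natCast]
    linear_combination ((m + 2 : ℕ) : L) * hθ
  have hnormθ : Algebra.norm F θ = (-1) ^ (m + 2) * -b := by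
    rw [Algebra.PowerBasis.norm_gen_eq_coeff_zero_minpoly, hmin, hdim]; simp
  apply mul_left_cancel₀ (show Algebra.norm F θ ≠ 0 by simp [hnormθ, hb])
  rw [← map_mul, hmul, map_mul, Algebra.norm_algebraMap, norm_algebraMap_sub_gen, hmin,
    pb.finrank, hdim, hnormθ]
  simp only [eval_sub, eval_pow, eval_mul, eval_X, eval_C, show m + 2 - 1 = m + 1 from rfl]
  rw [show c ^ (m + 2) * (r ^ (m + 2) - a * r - b) =
    (c * r) ^ (m + 2) - a * c ^ (m + 1) * (c * r) - b * c ^ (m + 2) by ring, hr]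
  have hsq : ((-1 : F) ^ (m + 2)) ^ 2 = 1 := by rw [← pow_mul, pow_mul']; simp
  simp only [hc, mul_pow]
  linear_combination (-b * ((m + 2 : ℕ) ^ (m + 2) * b ^ (m + 1) -
    (1 - ((m + 2 : ℕ) : F)) ^ (m + 1) * a ^ (m + 2))) * hsq

end PowerBasis

theorem AlgEquiv.adjoin_apply_eq_integralClosure {R A B : Type*} [CommRing R] [CommRing A]
    [CommRing B] [Algebra R A] [Algebra R B] (e : A ≃ₐ[R] B) {x : A}
    (h : Algebra.adjoin R {x} = integralClosure R A) :
    Algebra.adjoin R {e x} = integralClosure R B := by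
  have := congrArg (Subalgebra.map (e : A →ₐ[R] B)) h
  rwa [AlgHom.map_adjoin, Set.image_singleton, integralClosure_map_algEquiv] at this

theorem isIntegral_of_adjoin_eq_integralClosure {R A : Type*} [CommRing R] [CommRing A]
    [Algebra R A] {x : A} (h : Algebra.adjoin R {x} = integralClosure R A) : IsIntegral R x := by
  rw [← mem_integralClosure_iff, ← h]
  exact Algebra.self_mem_adjoin_singleton R x

open IntermediateField in
theorem IsMonogenic.exists_powerBasis {L : Type*} [Field L] [CharZero L] {f : ℤ[X]}
    (hf : IsMonogenic f) {θ : L} (hθ : aeval θ f = 0) {K : IntermediateField ℚ L}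
    (hK : ℚ⟮θ⟯ = K) :
    ∃ pb : PowerBasis ℚ K, minpoly ℚ pb.gen = f.map (algebraMap ℤ ℚ) ∧
      Algebra.adjoin ℤ {pb.gen} = integralClosure ℤ K := by
  subst hK
  have hroot : aeval θ (f.map (algebraMap ℤ ℚ)) = 0 := by rwa [aeval_map_algebraMap]
  have hmin := (minpoly.eq_of_irreducible_of_monic hf.2.1 hroot (hf.1.map _)).symm
  have hint : IsIntegral ℚ θ := ⟨_, hf.1.map _, by rwa [← aeval_def]⟩
  have hmono := hf.2.2
  rw [← hmin] at hmono
  refine ⟨adjoin.powerBasis hint, (minpoly_gen ℚ θ).trans hmin, ?_⟩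
  have := ((adjoinRootEquivAdjoin ℚ hint).restrictScalars ℤ).adjoin_apply_eq_integralClosure hmono
  rwa [AlgEquiv.restrictScalars_apply, adjoinRootEquivAdjoin_apply_root] at this

section

variable {K : Type*} [Field K] [NumberField K]

theorem PowerBasis.toMatrix_isIntegral_of_adjoin_eq_integralClosure (pb pb' : PowerBasis ℚ K)
    (h : Algebra.adjoin ℤ {pb.gen} = integralClosure ℤ K) (h' : IsIntegral ℤ pb'.gen) (i j) :
    IsIntegral ℤ (pb.basis.toMatrix pb'.basis i j) := by
  have hint := isIntegral_of_adjoin_eq_integralClosure h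
  have hmem : pb'.gen ∈ Algebra.adjoin ℤ {pb.gen} := h ▸ h'
  rw [Algebra.adjoin_singleton_eq_range_aeval] at hmem
  obtain ⟨P, hP⟩ := hmem
  exact PowerBasis.toMatrix_isIntegral hP hint
    (minpoly.isIntegrallyClosed_eq_field_fractions' ℚ hint) i j

theorem Algebra.discr_eq_of_adjoin_eq_integralClosure (pb₁ pb₂ : PowerBasis ℚ K)
    (h₁ : Algebra.adjoin ℤ {pb₁.gen} = integralClosure ℤ K)
    (h₂ : Algebra.adjoin ℤ {pb₂.gen} = integralClosure ℤ K) :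
    Algebra.discr ℚ pb₁.basis = Algebra.discr ℚ pb₂.basis :=
  Algebra.discr_eq_discr_of_toMatrix_coeff_isIntegral K
    (pb₁.toMatrix_isIntegral_of_adjoin_eq_integralClosure pb₂ h₁
      (isIntegral_of_adjoin_eq_integralClosure h₂))
    (pb₂.toMatrix_isIntegral_of_adjoin_eq_integralClosure pb₁ h₂
      (isIntegral_of_adjoin_eq_integralClosure h₁))

end

theorem norm_aeval_derivative_minpoly_of_eq_map {K : Type*} [Field K] [Algebra ℚ K]
    (pb : PowerBasis ℚ K) {N b : ℕ} (hN : 3 ≤ N)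
    (hmin : minpoly ℚ pb.gen =
      (X ^ N - C ((N : ℤ) * ((N : ℤ) - 1) ^ b) * X - C ((N : ℤ) - 1)).map (algebraMap ℤ ℚ)) :
    Algebra.norm ℚ (aeval pb.gen (derivative (minpoly ℚ pb.gen))) = (-1) ^ (N + 1) *
      (N ^ N * (N - 1) ^ (N - 1) - (1 - N) ^ (N - 1) * ((N : ℚ) * (N - 1) ^ b) ^ N) := by
  have hN' : (3 : ℚ) ≤ N := by exact_mod_cast hN
  refine pb.norm_aeval_derivative_minpoly_of_eq_trinomial (by omega) ?_ ?_ (by simpa using hmin)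
  · exact mul_ne_zero (by linarith) (mul_ne_zero (by linarith) (pow_ne_zero _ (by linarith)))
  · linarith

theorem eq_of_norm_aeval_derivative_trinomial_eq {N b₁ b₂ : ℕ} (hN : 3 ≤ N)
    (h : (-1) ^ (N + 1) *
        (N ^ N * (N - 1) ^ (N - 1) - (1 - N) ^ (N - 1) * ((N : ℚ) * (N - 1) ^ b₁) ^ N) =
      (-1) ^ (N + 1) *
        (N ^ N * (N - 1) ^ (N - 1) - (1 - N) ^ (N - 1) * ((N : ℚ) * (N - 1) ^ b₂) ^ N)) :
    b₁ = b₂ := by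
  have hN' : (3 : ℚ) ≤ N := by exact_mod_cast hN
  have h' := sub_right_injective (mul_left_cancel₀ (pow_ne_zero _ (by norm_num)) h)
  rw [mul_pow, mul_pow, ← pow_mul, ← pow_mul] at h'
  have hpow := mul_left_cancel₀ (pow_ne_zero _ (by linarith))
    (mul_left_cancel₀ (pow_ne_zero _ (by linarith)) h')
  exact Nat.eq_of_mul_eq_mul_right (by omega)
    (pow_right_injective₀ (by linarith) (by linarith) hpow)

theorem stmt_14_general (N b₁ b₂ : ℕ) (hN : 6 ≤ N)
    (h₁ : IsMonogenic (X ^ N - C ((N : ℤ) * ((N : ℤ) - 1) ^ b₁) * X - C ((N : ℤ) - 1)))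
    (h₂ : IsMonogenic (X ^ N - C ((N : ℤ) * ((N : ℤ) - 1) ^ b₂) * X - C ((N : ℤ) - 1)))
    (θ₁ θ₂ : ℂ)
    (hθ₁ : aeval θ₁ (X ^ N - C ((N : ℤ) * ((N : ℤ) - 1) ^ b₁) * X - C ((N : ℤ) - 1)) = 0)
    (hθ₂ : aeval θ₂ (X ^ N - C ((N : ℤ) * ((N : ℤ) - 1) ^ b₂) * X - C ((N : ℤ) - 1)) = 0)
    (heq : IntermediateField.adjoin ℚ {θ₁} = IntermediateField.adjoin ℚ {θ₂}) :
    b₁ = b₂ := by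
  obtain ⟨pb₁, hmin₁, hmono₁⟩ := h₁.exists_powerBasis hθ₁ rfl
  obtain ⟨pb₂, hmin₂, hmono₂⟩ := h₂.exists_powerBasis hθ₂ heq.symm
  have : NumberField (IntermediateField.adjoin ℚ {θ₁}) := { to_finiteDimensional := pb₁.finite }
  have hdisc := Algebra.discr_eq_of_adjoin_eq_integralClosure pb₁ pb₂ hmono₁ hmono₂
  rw [Algebra.discr_powerBasis_eq_norm, Algebra.discr_powerBasis_eq_norm,
    norm_aeval_derivative_minpoly_of_eq_map pb₁ (by omega) hmin₁,
    norm_aeval_derivative_minpoly_of_eq_map pb₂ (by omega) hmin₂] at hdisc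
  exact eq_of_norm_aeval_derivative_trinomial_eq (by omega)
    (mul_left_cancel₀ (pow_ne_zero _ (by norm_num)) hdisc)

theorem stmt_14 (N b₁ b₂ : ℕ) (hN : 6 ≤ N) (hmod : N % 4 = 2)
    (hb₁ : 1 ≤ b₁) (hb₂ : 1 ≤ b₂)
    (h₁ : IsMonogenic (X ^ N - C ((N : ℤ) * ((N : ℤ) - 1) ^ b₁) * X - C ((N : ℤ) - 1)))
    (h₂ : IsMonogenic (X ^ N - C ((N : ℤ) * ((N : ℤ) - 1) ^ b₂) * X - C ((N : ℤ) - 1)))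
    (θ₁ θ₂ : ℂ)
    (hθ₁ : aeval θ₁ (X ^ N - C ((N : ℤ) * ((N : ℤ) - 1) ^ b₁) * X - C ((N : ℤ) - 1)) = 0)
    (hθ₂ : aeval θ₂ (X ^ N - C ((N : ℤ) * ((N : ℤ) - 1) ^ b₂) * X - C ((N : ℤ) - 1)) = 0)
    (heq : IntermediateField.adjoin ℚ {θ₁} = IntermediateField.adjoin ℚ {θ₂}) :
    b₁ = b₂ :=
  stmt_14_general N b₁ b₂ hN h₁ h₂ θ₁ θ₂ hθ₁ hθ₂ heq
end

section
/- Let b and N be integers with b ≥ 1, N ≥ 3, and N ≡ 3 (mod 4), and suppose that δ := 1 − N^{(b+1)N−b} is squarefree. Then the ideal class group of the imaginary quadratic field ℚ(√δ) contains an element of order (b+1)N − b. -/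
/-!
Put `m = (b + 1) N - b`, which is odd since `N` is, and `δ = 1 - N ^ m`. The element
`π = 1 - √δ` has norm `N ^ m` and satisfies `π ^ 2 + N ^ m = 2π`; as `N ^ m` is odd this gives
`(N, π) ^ m = (π)`, so `A = (N, π)` has norm `N` and its class has order dividing `m`.
If `A ^ d = (α)` for a proper divisor `d` of `m`, then `d` is odd and `d + 2 ≤ m`. Since `δ` is
squarefree, `4 N(α) = e ^ 2 - δ f ^ 2` with `e, f ∈ ℤ`, that is
`e ^ 2 + (N ^ m - 1) f ^ 2 = 4 N ^ d`: for `f ≠ 0` the left side is too large, and for `f = 0`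
the number `N ^ d ≡ 3 (mod 4)` would be a square.
-/

open NumberField
open scoped nonZeroDivisors

namespace QuadraticAlgebra

variable {R : Type*} [CommRing R] {a b : R}

theorem algebra_norm_eq_norm (z : QuadraticAlgebra R a b) : Algebra.norm R z = z.norm :=
  det_toLinearMap_eq_norm z

theorem algebra_trace_eq_trace (z : QuadraticAlgebra R a b) :
    Algebra.trace R (QuadraticAlgebra R a b) z = trace z := by
  rw [Algebra.trace_eq_matrix_trace (basis a b), Matrix.trace_fin_two]
  simp [Algebra.leftMulMatrix_eq_repr_mul, basis, linearEquivTuple, equivProd, trace_def]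
  ring

variable {F K : Type*} [Field F] [Field K] [Algebra F K] {d : F} {θ : K}

noncomputable def algEquivOfSqEq (hθ : θ ^ 2 = algebraMap F K d) (hd : ∀ r : F, r ^ 2 ≠ d)
    (hgen : Algebra.adjoin F {θ} = ⊤) : QuadraticAlgebra F d 0 ≃ₐ[F] K :=
  have hθ' : θ * θ = d • 1 + (0 : F) • θ := by
    rw [← sq, hθ, Algebra.algebraMap_eq_smul_one, zero_smul, add_zero]
  AlgEquiv.ofBijective (lift ⟨θ, hθ'⟩) <| by
    refine ⟨fun z w hzw => ?_, fun z => ?_⟩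
    · -- this `Fact` makes `QuadraticAlgebra F d 0` a field
      have : Fact (∀ r : F, r ^ 2 ≠ d + 0 * r) := ⟨by simpa using hd⟩
      exact (lift ⟨θ, hθ'⟩).toRingHom.injective hzw
    · have hle : Algebra.adjoin F {θ} ≤ (lift ⟨θ, hθ'⟩).range :=
        Algebra.adjoin_le (Set.singleton_subset_iff.mpr ⟨ω, by simp⟩)
      exact hle (hgen ▸ Algebra.mem_top)

theorem algEquivOfSqEq_mk (hθ : θ ^ 2 = algebraMap F K d) (hd : ∀ r : F, r ^ 2 ≠ d)
    (hgen : Algebra.adjoin F {θ} = ⊤) (x y : F) :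
    algEquivOfSqEq hθ hd hgen ⟨x, y⟩ = algebraMap F K x + y • θ := by
  rw [Algebra.algebraMap_eq_smul_one]
  exact lift_apply_apply _ _

theorem norm_algEquivOfSqEq (hθ : θ ^ 2 = algebraMap F K d) (hd : ∀ r : F, r ^ 2 ≠ d)
    (hgen : Algebra.adjoin F {θ} = ⊤) (z : QuadraticAlgebra F d 0) :
    Algebra.norm F (algEquivOfSqEq hθ hd hgen z) = z.re ^ 2 - d * z.im ^ 2 := by
  rw [Algebra.norm_eq_of_algEquiv, algebra_norm_eq_norm, norm_def]
  ring

theorem trace_algEquivOfSqEq (hθ : θ ^ 2 = algebraMap F K d) (hd : ∀ r : F, r ^ 2 ≠ d)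
    (hgen : Algebra.adjoin F {θ} = ⊤) (z : QuadraticAlgebra F d 0) :
    Algebra.trace F K (algEquivOfSqEq hθ hd hgen z) = 2 * z.re := by
  rw [Algebra.trace_eq_of_algEquiv, algebra_trace_eq_trace, trace_def, zero_mul, add_zero]

end QuadraticAlgebra

theorem Squarefree.exists_eq_intCast_of_mul_sq_eq {δ : ℤ} (hδ : Squarefree δ) {q : ℚ} {n : ℤ}
    (hq : δ * q ^ 2 = n) : ∃ a : ℤ, q = a := by
  have hnum : δ * q.num ^ 2 = n * (q.den : ℤ) ^ 2 := by
    rw [← Rat.num_div_den q, div_pow] at hq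
    have hden : (q.den : ℚ) ≠ 0 := by exact_mod_cast q.den_nz
    field_simp at hq
    exact_mod_cast (by linear_combination hq : (δ : ℚ) * q.num ^ 2 = n * q.den ^ 2)
  have hcop : IsCoprime ((q.den : ℤ) ^ 2) (q.num ^ 2) :=
    (Rat.isCoprime_num_den q).symm.pow
  have hdvd : (q.den : ℤ) ^ 2 ∣ δ := hcop.dvd_of_dvd_mul_right ⟨n, by linear_combination hnum⟩
  have hunit : IsUnit (q.den : ℤ) := hδ _ (by simpa [sq] using hdvd)
  have hden : q.den = 1 := by simpa using Int.isUnit_iff.mp hunit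
  exact ⟨q.num, (Rat.coe_int_num_of_den_eq_one hden).symm⟩

theorem Nat.add_two_le_of_dvd_of_ne {d m : ℕ} (hm : Odd m) (hdvd : d ∣ m) (hne : d ≠ m) :
    d + 2 ≤ m := by
  obtain ⟨t, rfl⟩ := hdvd
  obtain ⟨hd, ⟨j, rfl⟩⟩ := Nat.odd_mul.mp hm
  have hj : j ≠ 0 := by rintro rfl; simp at hne
  have hd : 0 < d := hd.pos
  nlinarith [Nat.one_le_iff_ne_zero.mpr hj]

theorem sq_ne_pow_of_mod_four_eq_three {N d : ℕ} (hN : N % 4 = 3) (hd : Odd d) (k : ℤ) :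
    k ^ 2 ≠ (N : ℤ) ^ d := by
  intro hk
  have hk4 : (k : ZMod 4) ^ 2 = 3 := by
    obtain ⟨j, rfl⟩ := hd
    have hN4 : (N : ZMod 4) = 3 := by rw [← ZMod.natCast_mod, hN]; rfl
    rw [← Int.cast_pow, hk]
    push_cast
    rw [hN4, pow_succ, pow_mul, show (3 : ZMod 4) ^ 2 = 1 by decide, one_pow, one_mul]
  generalize (k : ZMod 4) = x at hk4
  revert x
  decide

theorem sq_add_mul_sq_ne_four_mul_pow {N d m : ℕ} (hN : N % 4 = 3) (hd : Odd d) (hdm : d + 2 ≤ m)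
    (e f : ℤ) : e ^ 2 + ((N : ℤ) ^ m - 1) * f ^ 2 ≠ 4 * N ^ d := by
  intro h
  rcases eq_or_ne f 0 with rfl | hf
  · obtain ⟨k, rfl⟩ : Even e := (Int.even_pow' two_ne_zero).mp ⟨2 * N ^ d, by simp at h; omega⟩
    exact sq_ne_pow_of_mod_four_eq_three hN hd k (by linarith)
  · have hN3 : (3 : ℤ) ≤ N := by omega
    have hNm : 9 * (N : ℤ) ^ d ≤ (N : ℤ) ^ m :=
      calc 9 * (N : ℤ) ^ d ≤ (N : ℤ) ^ 2 * (N : ℤ) ^ d := by gcongr; nlinarith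
        _ = (N : ℤ) ^ (d + 2) := by ring
        _ ≤ (N : ℤ) ^ m := pow_le_pow_right₀ (by omega) hdm
    have hf2 : 0 < f ^ 2 := by positivity
    nlinarith [sq_nonneg e, pow_pos (show (0 : ℤ) < N by omega) d]

namespace Ideal

variable {R : Type*} [CommRing R]

theorem sup_pow_le_pow_sup (I J : Ideal R) (n : ℕ) : (I ⊔ J) ^ n ≤ I ^ n ⊔ J := by
  induction n with
  | zero => simp
  | succ n ih =>
    calc (I ⊔ J) ^ (n + 1) = (I ⊔ J) ^ n * (I ⊔ J) := pow_succ _ _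
      _ ≤ (I ^ n ⊔ J) * (I ⊔ J) := mul_mono_left ih
      _ = I ^ n * I ⊔ (J * I ⊔ (I ^ n ⊔ J) * J) := by rw [mul_sup, sup_mul, sup_assoc]
      _ ≤ I ^ (n + 1) ⊔ J := by
        rw [← pow_succ]
        exact sup_le_sup_left (sup_le mul_le_left mul_le_right) _

theorem span_pair_pow_eq_span_singleton {x π : R} {m : ℕ} (hdvd : π ∣ x ^ m)
    (hmem : π ∈ span {π ^ 2, x ^ m}) : span {x, π} ^ m = span {π} := by
  have hxA : x ∈ span {x, π} := subset_span (Set.mem_insert _ _)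
  have hπA : π ∈ span {x, π} := subset_span (Set.mem_insert_of_mem _ rfl)
  refine le_antisymm ?_ (span_le.mpr (Set.singleton_subset_iff.mpr ?_))
  · calc span {x, π} ^ m = (span {x} ⊔ span {π}) ^ m := by rw [span_insert]
      _ ≤ span {x} ^ m ⊔ span {π} := sup_pow_le_pow_sup _ _ m
      _ = span {π} := by
        rw [span_singleton_pow, sup_eq_right, span_singleton_le_span_singleton]
        exact hdvd
  · suffices ∀ k ≤ m, π ∈ span {x, π} ^ k from this m le_rfl
    intro k hk
    induction k with
    | zero => simp
    | succ k ih =>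
      refine span_le.mpr ?_ hmem
      rintro _ (rfl | rfl)
      · rw [sq, pow_succ]
        exact mul_mem_mul (ih (by omega)) hπA
      · exact pow_le_pow_right hk (pow_mem_pow hxA m)

theorem span_natCast_one_sub_pow {θ : R} {N m : ℕ} (hN : Odd N)
    (hθ : θ ^ 2 = 1 - N ^ m) : span {(N : R), 1 - θ} ^ m = span {1 - θ} := by
  obtain ⟨c, hc⟩ := hN.pow (n := m)
  have hc : (N : R) ^ m = 2 * c + 1 := by simpa using congrArg (Nat.cast : ℕ → R) hc
  refine span_pair_pow_eq_span_singleton ⟨1 + θ, by linear_combination hθ⟩ ?_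
  rw [mem_span_pair]
  -- `π = 1 - θ` satisfies `π ^ 2 + N ^ m = 2 * π`, and `2 * (c + 1) - N ^ m = 1`
  exact ⟨c + 1, c + θ, by linear_combination (c + 1) * hθ + (θ - 1) * hc⟩

theorem absNorm_eq_of_pow_eq_span_singleton {S : Type*} [CommRing S] [IsDedekindDomain S]
    [Module.Free ℤ S] [Module.Finite ℤ S] {I : Ideal S} {π : S} {m N : ℕ}
    (hm : m ≠ 0) (hI : I ^ m = span {π}) (hπ : (Algebra.norm ℤ π).natAbs = N ^ m) :
    absNorm I = N := by
  have h := congrArg absNorm hI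
  rw [map_pow, absNorm_span_singleton, hπ] at h
  exact Nat.pow_left_injective hm h

end Ideal

theorem ClassGroup.orderOf_mk0_eq {R : Type*} [CommRing R] [IsDedekindDomain R]
    (I : (Ideal R)⁰) {m : ℕ} (hm : ((I : Ideal R) ^ m).IsPrincipal)
    (h : ∀ d, d ∣ m → d ≠ m → ¬((I : Ideal R) ^ d).IsPrincipal) :
    orderOf (ClassGroup.mk0 I) = m := by
  have hpow (d : ℕ) : ClassGroup.mk0 I ^ d = 1 ↔ ((I : Ideal R) ^ d).IsPrincipal := by
    rw [← map_pow, ClassGroup.mk0_eq_one_iff, SubmonoidClass.coe_pow]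
  by_contra hne
  exact h _ (orderOf_dvd_of_pow_eq_one ((hpow m).2 hm)) hne ((hpow _).1 (pow_orderOf_eq_one _))

section QuadraticField

variable {K : Type*} [Field K] [NumberField K] {δ : ℤ} {θ : K}

theorem exists_four_mul_norm_eq_sq_sub_mul_sq (hsf : Squarefree δ)
    (hθ : θ ^ 2 = algebraMap ℚ K δ) (hδ : ∀ r : ℚ, r ^ 2 ≠ δ) (hgen : Algebra.adjoin ℚ {θ} = ⊤)
    (α : 𝓞 K) : ∃ e f : ℤ, 4 * Algebra.norm ℤ α = e ^ 2 - δ * f ^ 2 := by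
  obtain ⟨z, hz⟩ := (QuadraticAlgebra.algEquivOfSqEq hθ hδ hgen).surjective α
  have hnorm : (Algebra.norm ℤ α : ℚ) = z.re ^ 2 - δ * z.im ^ 2 := by
    rw [Algebra.coe_norm_int, ← hz, QuadraticAlgebra.norm_algEquivOfSqEq]
  have htrace : (Algebra.trace ℤ (𝓞 K) α : ℚ) = 2 * z.re := by
    rw [Algebra.coe_trace_int, ← hz, QuadraticAlgebra.trace_algEquivOfSqEq]
  obtain ⟨f, hf⟩ := hsf.exists_eq_intCast_of_mul_sq_eq (q := 2 * z.im)
    (n := Algebra.trace ℤ (𝓞 K) α ^ 2 - 4 * Algebra.norm ℤ α) (by push_cast [hnorm, htrace]; ring)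
  refine ⟨Algebra.trace ℤ (𝓞 K) α, f, ?_⟩
  exact_mod_cast (by rw [← hf, hnorm, htrace]; ring :
    4 * (Algebra.norm ℤ α : ℚ) = (Algebra.trace ℤ (𝓞 K) α : ℚ) ^ 2 - δ * (f : ℚ) ^ 2)

theorem norm_one_sub_of_sq_eq (hθ : θ ^ 2 = algebraMap ℚ K δ) (hδ : ∀ r : ℚ, r ^ 2 ≠ δ)
    (hgen : Algebra.adjoin ℚ {θ} = ⊤) {θ' : 𝓞 K} (hθ' : (θ' : K) = θ) :
    Algebra.norm ℤ (1 - θ') = 1 - δ := by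
  have h := QuadraticAlgebra.norm_algEquivOfSqEq hθ hδ hgen ⟨1, -1⟩
  rw [QuadraticAlgebra.algEquivOfSqEq_mk, map_one, neg_one_smul, ← sub_eq_add_neg, ← hθ',
    ← map_one (algebraMap (𝓞 K) K), ← map_sub, ← Algebra.coe_norm_int] at h
  exact_mod_cast (by rw [h]; ring : (Algebra.norm ℤ (1 - θ') : ℚ) = 1 - δ)

theorem not_isPrincipal_pow_of_absNorm_eq {N m d : ℕ} (hN : N % 4 = 3) (hsf : Squarefree δ)
    (hδN : δ = 1 - N ^ m) (hθ : θ ^ 2 = algebraMap ℚ K δ) (hδ : ∀ r : ℚ, r ^ 2 ≠ δ)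
    (hgen : Algebra.adjoin ℚ {θ} = ⊤) {I : Ideal (𝓞 K)} (hI : Ideal.absNorm I = N) (hd : Odd d)
    (hdm : d + 2 ≤ m) : ¬(I ^ d).IsPrincipal := by
  rintro ⟨α, hα⟩
  have habs : (Algebra.norm ℤ α).natAbs = N ^ d := by
    rw [← Ideal.absNorm_span_singleton, ← Ideal.submodule_span_eq, ← hα, map_pow, hI]
  obtain ⟨e, f, hef⟩ := exists_four_mul_norm_eq_sq_sub_mul_sq hsf hθ hδ hgen α
  have hnonneg : 0 ≤ Algebra.norm ℤ α := by
    have : (1 : ℤ) ≤ N ^ m := one_le_pow₀ (by omega)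
    nlinarith [sq_nonneg e, sq_nonneg f]
  have hnorm : Algebra.norm ℤ α = N ^ d := by
    rw [← Int.natAbs_of_nonneg hnonneg, habs]; push_cast; rfl
  exact sq_add_mul_sq_ne_four_mul_pow hN hd hdm e f (by rw [← hnorm, hef, hδN]; ring)

end QuadraticField

theorem stmt_19_general (b N : ℕ) (hmod : N % 4 = 3)
    (hsf : Squarefree (1 - (N : ℤ) ^ ((b + 1) * N - b)))
    (K : Type) [Field K] [NumberField K] (θ : K)
    (hθ : θ ^ 2 = ((1 - (N : ℤ) ^ ((b + 1) * N - b) : ℤ) : K))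
    (hgen : Algebra.adjoin ℚ {θ} = ⊤) :
    ∃ g : ClassGroup (NumberField.RingOfIntegers K),
      orderOf g = (b + 1) * N - b := by
  have hN : Odd N := Nat.odd_iff.mpr (by omega)
  have hm : Odd ((b + 1) * N - b) := by
    obtain ⟨k, rfl⟩ := hN
    exact ⟨b * k + k, by rw [show (b + 1) * (2 * k + 1) = 2 * (b * k + k) + 1 + b by ring]; omega⟩
  set m := (b + 1) * N - b
  set δ : ℤ := 1 - N ^ m with hδN
  have hθℚ : θ ^ 2 = algebraMap ℚ K δ := by rw [hθ, map_intCast]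
  have hδ : ∀ r : ℚ, r ^ 2 ≠ δ := fun r h => by
    have : (1 : ℚ) < N ^ m := one_lt_pow₀ (by norm_cast; omega) hm.pos.ne'
    nlinarith [sq_nonneg r, show (δ : ℚ) = 1 - N ^ m by simp [δ]]
  let θ' : 𝓞 K := ⟨θ, IsIntegral.of_pow two_pos (hθ ▸ isIntegral_algebraMap (x := δ))⟩
  have hθ' : θ' ^ 2 = 1 - N ^ m :=
    RingOfIntegers.coe_injective (by rw [map_pow]; exact hθ.trans (by simp [δ]))
  have hAm := Ideal.span_natCast_one_sub_pow hN hθ'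
  have hnormA : Ideal.absNorm (Ideal.span {(N : 𝓞 K), 1 - θ'}) = N :=
    Ideal.absNorm_eq_of_pow_eq_span_singleton hm.pos.ne' hAm
      (by rw [norm_one_sub_of_sq_eq hθℚ hδ hgen rfl, hδN, sub_sub_cancel, Int.natAbs_pow,
        Int.natAbs_natCast])
  have hA0 : Ideal.span {(N : 𝓞 K), 1 - θ'} ∈ (Ideal (𝓞 K))⁰ :=
    Ideal.absNorm_ne_zero_iff_mem_nonZeroDivisors.mp (by rw [hnormA]; omega)
  exact ⟨ClassGroup.mk0 ⟨_, hA0⟩, ClassGroup.orderOf_mk0_eq _ ⟨⟨1 - θ', hAm⟩⟩ fun d hdvd hne =>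
    not_isPrincipal_pow_of_absNorm_eq hmod hsf hδN hθℚ hδ hgen hnormA (hm.of_dvd_nat hdvd)
      (Nat.add_two_le_of_dvd_of_ne hm hdvd hne)⟩

theorem stmt_19 (b N : ℕ) (hb : 1 ≤ b) (hN : 3 ≤ N) (hmod : N % 4 = 3)
    (hsf : Squarefree (1 - (N : ℤ) ^ ((b + 1) * N - b)))
    (K : Type) [Field K] [NumberField K] (θ : K)
    (hθ : θ ^ 2 = ((1 - (N : ℤ) ^ ((b + 1) * N - b) : ℤ) : K))
    (hgen : Algebra.adjoin ℚ {θ} = ⊤) :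
    ∃ g : ClassGroup (NumberField.RingOfIntegers K),
      orderOf g = (b + 1) * N - b :=
  stmt_19_general b N hmod hsf K θ hθ hgen
end
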